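/- arXiv:1912.02320 — 2 statements merged into one kernel-verified Lean document; each statement's English description precedes it below -/
import Mathlib

section
/- Suppose b = 0 and p = 1, so the system reads u_t + a((u+v)u)_x + c u_{xxx} = 0, v_t + a((u+v)v)_x + c v_{xxx} = 0. If (u, v) is a smooth solution, then for every real ε the pair ũ = u + (1 − e^{−ε}) v, ṽ = e^{−ε} v is also a solution. (This is the one-parameter group generated by the symmetry X₄ = v(∂_u − ∂_v).) -/
/-- Partial derivative with respect to the first variable (time `t`). -/
noncomputable def pderivT (u : ℝ × ℝ → ℝ) : ℝ × ℝ → ℝ :=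
  fun q => deriv (fun s => u (s, q.2)) q.1

/-- Partial derivative with respect to the second variable (space `x`). -/
noncomputable def pderivX (u : ℝ × ℝ → ℝ) : ℝ × ℝ → ℝ :=
  fun q => deriv (fun y => u (q.1, y)) q.2

/-- `(u, v)` is a smooth solution of the Gardner-type system
`u_t + a((u^p + v^p)u)_x + b((uv)^p v)_x + c u_{xxx} = 0`,
`v_t + a((u^p + v^p)v)_x + b((uv)^p u)_x + c v_{xxx} = 0`. -/
def IsGardnerSolution (a b c : ℝ) (p : ℕ) (u v : ℝ × ℝ → ℝ) : Prop :=
  ContDiff ℝ (⊤ : ℕ∞) u ∧ ContDiff ℝ (⊤ : ℕ∞) v ∧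
  (∀ q : ℝ × ℝ,
    pderivT u q
      + pderivX (fun q => a * ((u q) ^ p + (v q) ^ p) * u q
          + b * (u q * v q) ^ p * v q) q
      + c * pderivX (pderivX (pderivX u)) q = 0) ∧
  (∀ q : ℝ × ℝ,
    pderivT v q
      + pderivX (fun q => a * ((u q) ^ p + (v q) ^ p) * v q
          + b * (u q * v q) ^ p * u q) q
      + c * pderivX (pderivX (pderivX v)) q = 0)

lemma pderivX_eq (f : ℝ × ℝ → ℝ) (hf : ContDiff ℝ (⊤ : ℕ∞) f) :
    pderivX f = fun q => fderiv ℝ f q (0, 1) := by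
  funext q
  have h1 : HasDerivAt (fun y : ℝ => ((q.1, y) : ℝ × ℝ)) (0, 1) q.2 :=
    (hasDerivAt_const q.2 q.1).prodMk (hasDerivAt_id q.2)
  have h2 := ((hf.differentiable (by simp) (q.1, q.2)).hasFDerivAt).comp_hasDerivAt q.2 h1
  exact h2.deriv

lemma pderivT_eq (f : ℝ × ℝ → ℝ) (hf : ContDiff ℝ (⊤ : ℕ∞) f) :
    pderivT f = fun q => fderiv ℝ f q (1, 0) := by
  funext q
  have h1 : HasDerivAt (fun s : ℝ => ((s, q.2) : ℝ × ℝ)) (1, 0) q.1 :=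
    (hasDerivAt_id q.1).prodMk (hasDerivAt_const q.1 q.2)
  have h2 := ((hf.differentiable (by simp) (q.1, q.2)).hasFDerivAt).comp_hasDerivAt q.1 h1
  exact h2.deriv

lemma pderivX_contDiff (f : ℝ × ℝ → ℝ) (hf : ContDiff ℝ (⊤ : ℕ∞) f) :
    ContDiff ℝ (⊤ : ℕ∞) (pderivX f) := by
  rw [pderivX_eq f hf]
  exact (hf.fderiv_right (by simp)).clm_apply contDiff_const

lemma sliceX_diff (f : ℝ × ℝ → ℝ) (hf : ContDiff ℝ (⊤ : ℕ∞) f) (t y : ℝ) :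
    DifferentiableAt ℝ (fun y => f (t, y)) y := by
  have : ContDiff ℝ (⊤ : ℕ∞) (fun y : ℝ => f (t, y)) := hf.comp (contDiff_const.prodMk contDiff_id)
  exact (this.differentiable (by simp)) y

lemma sliceT_diff (f : ℝ × ℝ → ℝ) (hf : ContDiff ℝ (⊤ : ℕ∞) f) (s x : ℝ) :
    DifferentiableAt ℝ (fun s => f (s, x)) s := by
  have : ContDiff ℝ (⊤ : ℕ∞) (fun s : ℝ => f (s, x)) := hf.comp (contDiff_id.prodMk contDiff_const)
  exact (this.differentiable (by simp)) s

lemma pderivX_comb (k : ℝ) (f g : ℝ × ℝ → ℝ) (hf : ContDiff ℝ (⊤ : ℕ∞) f) (hg : ContDiff ℝ (⊤ : ℕ∞) g) :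
    pderivX (fun q => f q + k * g q) = fun q => pderivX f q + k * pderivX g q := by
  funext q
  have hfd := sliceX_diff f hf q.1 q.2
  have hgd := sliceX_diff g hg q.1 q.2
  show deriv (fun y => f (q.1, y) + k * g (q.1, y)) q.2 = _
  rw [deriv_fun_add hfd (hgd.const_mul k), deriv_const_mul k hgd]
  rfl

lemma pderivX_const_mul (k : ℝ) (f : ℝ × ℝ → ℝ) (hf : ContDiff ℝ (⊤ : ℕ∞) f) :
    pderivX (fun q => k * f q) = fun q => k * pderivX f q := by
  have h := pderivX_comb k (fun _ => 0) f contDiff_const hf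
  have h0 : pderivX (fun _ : ℝ × ℝ => (0:ℝ)) = fun _ => 0 := by
    funext q; simp [pderivX]
  funext q
  simpa [h0] using congrFun h q

lemma pderivT_comb (k : ℝ) (f g : ℝ × ℝ → ℝ) (hf : ContDiff ℝ (⊤ : ℕ∞) f) (hg : ContDiff ℝ (⊤ : ℕ∞) g) :
    pderivT (fun q => f q + k * g q) = fun q => pderivT f q + k * pderivT g q := by
  funext q
  have hfd := sliceT_diff f hf q.1 q.2
  have hgd := sliceT_diff g hg q.1 q.2
  show deriv (fun s => f (s, q.2) + k * g (s, q.2)) q.1 = _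
  rw [deriv_fun_add hfd (hgd.const_mul k), deriv_const_mul k hgd]
  rfl

/-- Symmetry `X₄ = v(∂_u - ∂_v)` for `b = 0`, `p = 1`: if `(u, v)` solves the system,
so does `(u + (1 - e^{-ε}) v, e^{-ε} v)`. -/
theorem stmt_4 (a b c : ℝ) (p : ℕ) (hb : b = 0) (hp : p = 1) (u v : ℝ × ℝ → ℝ)
    (huv : IsGardnerSolution a b c p u v) (ε : ℝ) :
    IsGardnerSolution a b c p
      (fun q => u q + (1 - Real.exp (-ε)) * v q)
      (fun q => Real.exp (-ε) * v q) := by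
  subst hb hp
  obtain ⟨hu, hv, h1, h2⟩ := huv
  set k : ℝ := Real.exp (-ε) with hk
  have hut : ContDiff ℝ (⊤ : ℕ∞) (fun q => u q + (1 - k) * v q) := hu.add (contDiff_const.mul hv)
  have hvt : ContDiff ℝ (⊤ : ℕ∞) (fun q => k * v q) := contDiff_const.mul hv
  -- original nonlinear integrands
  set F1 : ℝ × ℝ → ℝ := fun q => a * (u q ^ 1 + v q ^ 1) * u q + 0 * (u q * v q) ^ 1 * v q with hF1
  set F2 : ℝ × ℝ → ℝ := fun q => a * (u q ^ 1 + v q ^ 1) * v q + 0 * (u q * v q) ^ 1 * u q with hF2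
  have hF1c : ContDiff ℝ (⊤ : ℕ∞) F1 := by
    apply ContDiff.add
    · exact (contDiff_const.mul ((hu.pow 1).add (hv.pow 1))).mul hu
    · exact ((contDiff_const.mul ((hu.mul hv).pow 1))).mul hv
  have hF2c : ContDiff ℝ (⊤ : ℕ∞) F2 := by
    apply ContDiff.add
    · exact (contDiff_const.mul ((hu.pow 1).add (hv.pow 1))).mul hv
    · exact ((contDiff_const.mul ((hu.mul hv).pow 1))).mul hu
  -- third derivatives
  have D3u : pderivX (pderivX (pderivX (fun q => u q + (1 - k) * v q)))
      = fun q => pderivX (pderivX (pderivX u)) q + (1 - k) * pderivX (pderivX (pderivX v)) q := by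
    rw [pderivX_comb _ _ _ hu hv, pderivX_comb _ _ _ (pderivX_contDiff _ hu) (pderivX_contDiff _ hv),
      pderivX_comb _ _ _ (pderivX_contDiff _ (pderivX_contDiff _ hu))
        (pderivX_contDiff _ (pderivX_contDiff _ hv))]
  have D3v : pderivX (pderivX (pderivX (fun q => k * v q)))
      = fun q => k * pderivX (pderivX (pderivX v)) q := by
    rw [pderivX_const_mul k v hv, pderivX_const_mul k _ (pderivX_contDiff _ hv),
      pderivX_const_mul k _ (pderivX_contDiff _ (pderivX_contDiff _ hv))]
  have Tu : pderivT (fun q => u q + (1 - k) * v q)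
      = fun q => pderivT u q + (1 - k) * pderivT v q := pderivT_comb _ _ _ hu hv
  have Tv : pderivT (fun q => k * v q) = fun q => k * pderivT v q := by
    have := pderivT_comb k (fun _ => 0) v contDiff_const hv
    funext q
    have h0 : pderivT (fun _ : ℝ × ℝ => (0:ℝ)) = fun _ => 0 := by
      funext q; simp [pderivT]
    simpa [h0] using congrFun this q
  refine ⟨hut, hvt, ?_, ?_⟩
  · intro q
    have hfun : (fun q => a * ((u q + (1 - k) * v q) ^ 1 + (k * v q) ^ 1) * (u q + (1 - k) * v q)
          + 0 * ((u q + (1 - k) * v q) * (k * v q)) ^ 1 * (k * v q))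
        = fun q => F1 q + (1 - k) * F2 q := by
      funext q; simp only [hF1, hF2]; ring
    rw [hfun, pderivX_comb _ _ _ hF1c hF2c, Tu, D3u]
    have e1 := h1 q
    have e2 := h2 q
    linear_combination e1 + (1 - k) * e2
  · intro q
    have hfun : (fun q => a * ((u q + (1 - k) * v q) ^ 1 + (k * v q) ^ 1) * (k * v q)
          + 0 * ((u q + (1 - k) * v q) * (k * v q)) ^ 1 * (u q + (1 - k) * v q))
        = fun q => k * F2 q := by
      funext q; simp only [hF2]; ring
    rw [hfun, pderivX_const_mul _ _ hF2c, Tv, D3v]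
    have e2 := h2 q
    linear_combination k * e2
end

section
/- Suppose b = 0 and p = 1, so the system reads u_t + a((u+v)u)_x + c u_{xxx} = 0, v_t + a((u+v)v)_x + c v_{xxx} = 0. If (u, v) is a smooth solution, then for any real constants c₁, c₂, c₄, c₅ the substitution φ(t,x) = (2a c₁ t + c₂)(u(t,x) + v(t,x)) − c₁ x + c₄, ψ(t,x) = (2a c₁ t + c₂)(u(t,x) + v(t,x)) − c₁ x + c₅ solves the adjoint system, i.e., φ_t + f_u φ_x + g_u ψ_x + c φ_{xxx} = 0 and ψ_t + f_v φ_x + g_v ψ_x + c ψ_{xxx} = 0 hold identically in (t, x). In particular the system is nonlinearly self-adjoint in this case. -/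
/-- `f(u,v) = a(u^p + v^p)u + b(uv)^p v`. -/
noncomputable def fGardner (a b : ℝ) (p : ℕ) (x y : ℝ) : ℝ :=
  a * (x ^ p + y ^ p) * x + b * (x * y) ^ p * y

/-- `g(u,v) = a(u^p + v^p)v + b(uv)^p u`. -/
noncomputable def gGardner (a b : ℝ) (p : ℕ) (x y : ℝ) : ℝ :=
  a * (x ^ p + y ^ p) * y + b * (x * y) ^ p * x

/-- `f_u`, the partial derivative of `f` in its first argument. -/
noncomputable def fGu (a b : ℝ) (p : ℕ) (x y : ℝ) : ℝ :=
  deriv (fun w => fGardner a b p w y) x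

/-- `f_v`, the partial derivative of `f` in its second argument. -/
noncomputable def fGv (a b : ℝ) (p : ℕ) (x y : ℝ) : ℝ :=
  deriv (fun w => fGardner a b p x w) y

/-- `g_u`, the partial derivative of `g` in its first argument. -/
noncomputable def gGu (a b : ℝ) (p : ℕ) (x y : ℝ) : ℝ :=
  deriv (fun w => gGardner a b p w y) x

/-- `g_v`, the partial derivative of `g` in its second argument. -/
noncomputable def gGv (a b : ℝ) (p : ℕ) (x y : ℝ) : ℝ :=
  deriv (fun w => gGardner a b p x w) y

/-- `(φ, ψ)` solves the adjoint system of the Gardner-type system along the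
solution `(u, v)`:
`φ_t + f_u φ_x + g_u ψ_x + c φ_{xxx} = 0`, `ψ_t + f_v φ_x + g_v ψ_x + c ψ_{xxx} = 0`,
with `f_u, f_v, g_u, g_v` evaluated at `(u(t,x), v(t,x))`. -/
def SolvesAdjoint (a b c : ℝ) (p : ℕ) (u v φ ψ : ℝ × ℝ → ℝ) : Prop :=
  (∀ q : ℝ × ℝ,
    pderivT φ q + fGu a b p (u q) (v q) * pderivX φ q
      + gGu a b p (u q) (v q) * pderivX ψ q
      + c * pderivX (pderivX (pderivX φ)) q = 0) ∧
  (∀ q : ℝ × ℝ,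
    pderivT ψ q + fGv a b p (u q) (v q) * pderivX φ q
      + gGv a b p (u q) (v q) * pderivX ψ q
      + c * pderivX (pderivX (pderivX ψ)) q = 0)

lemma fGu_eq (a x y : ℝ) : fGu a 0 1 x y = a * (2 * x + y) := by
  unfold fGu fGardner
  simp only [pow_one, zero_mul, add_zero]
  rw [show (fun w => a * (w + y) * w) = fun w => a * ((w + y) * w) from by
    funext w; ring]
  rw [HasDerivAt.deriv (f := fun w => a * ((w + y) * w)) ((((hasDerivAt_id' x).add_const y).mul (hasDerivAt_id' x)).const_mul a)]
  ring

lemma fGv_eq (a x y : ℝ) : fGv a 0 1 x y = a * x := by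
  unfold fGv fGardner
  simp only [pow_one, zero_mul, add_zero]
  rw [show (fun w => a * (x + w) * x) = fun w => a * x * w + a * x * x from by
    funext w; ring]
  rw [(((hasDerivAt_id' y).const_mul (a * x)).add_const (a * x * x)).deriv]
  simp

lemma gGu_eq (a x y : ℝ) : gGu a 0 1 x y = a * y := by
  unfold gGu gGardner
  simp only [pow_one, zero_mul, add_zero]
  rw [show (fun w => a * (w + y) * y) = fun w => a * y * w + a * y * y from by
    funext w; ring]
  rw [(((hasDerivAt_id' x).const_mul (a * y)).add_const (a * y * y)).deriv]
  simp

lemma gGv_eq (a x y : ℝ) : gGv a 0 1 x y = a * (x + 2 * y) := by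
  unfold gGv gGardner
  simp only [pow_one, zero_mul, add_zero]
  rw [show (fun w => a * (x + w) * w) = fun w => a * ((x + w) * w) from by
    funext w; ring]
  rw [HasDerivAt.deriv (f := fun w => a * ((x + w) * w)) ((((hasDerivAt_id' y).const_add x).mul (hasDerivAt_id' y)).const_mul a)]
  ring

lemma phiX (a c₁ c₂ c₄ : ℝ) (u v : ℝ × ℝ → ℝ)
    (hu : ContDiff ℝ (⊤ : ℕ∞) u) (hv : ContDiff ℝ (⊤ : ℕ∞) v) (t x : ℝ) :
    pderivX (fun q => (2 * a * c₁ * q.1 + c₂) * (u q + v q) - c₁ * q.2 + c₄) (t, x)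
      = (2 * a * c₁ * t + c₂) * (deriv (fun y => u (t, y)) x + deriv (fun y => v (t, y)) x)
        - c₁ := by
  have hU0 : Differentiable ℝ (fun y => u (t, y)) :=
    (hu.comp (contDiff_const.prodMk contDiff_id)).differentiable (by simp)
  have hV0 : Differentiable ℝ (fun y => v (t, y)) :=
    (hv.comp (contDiff_const.prodMk contDiff_id)).differentiable (by simp)
  show deriv (fun y => (2 * a * c₁ * t + c₂) * (u (t, y) + v (t, y)) - c₁ * y + c₄) x = _
  have h : HasDerivAt
      (fun y => (2 * a * c₁ * t + c₂) * (u (t, y) + v (t, y)) - c₁ * y + c₄)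
      ((2 * a * c₁ * t + c₂) * (deriv (fun y => u (t, y)) x + deriv (fun y => v (t, y)) x)
        - c₁ * 1) x :=
    ((((hU0 x).hasDerivAt.add (hV0 x).hasDerivAt).const_mul _).sub
      ((hasDerivAt_id' x).const_mul c₁)).add_const c₄
  rw [h.deriv]; ring

lemma keyGardner (a c c₁ c₂ c₄ : ℝ) (u v : ℝ × ℝ → ℝ)
    (hu : ContDiff ℝ (⊤ : ℕ∞) u) (hv : ContDiff ℝ (⊤ : ℕ∞) v)
    (heu : ∀ q : ℝ × ℝ, pderivT u q + pderivX (fun q => a * (u q + v q) * u q) q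
        + c * pderivX (pderivX (pderivX u)) q = 0)
    (hev : ∀ q : ℝ × ℝ, pderivT v q + pderivX (fun q => a * (u q + v q) * v q) q
        + c * pderivX (pderivX (pderivX v)) q = 0)
    (t x : ℝ) :
    pderivT (fun q => (2 * a * c₁ * q.1 + c₂) * (u q + v q) - c₁ * q.2 + c₄) (t, x)
      + 2 * a * (u (t, x) + v (t, x))
        * pderivX (fun q => (2 * a * c₁ * q.1 + c₂) * (u q + v q) - c₁ * q.2 + c₄) (t, x)
      + c * pderivX (pderivX (pderivX
          (fun q => (2 * a * c₁ * q.1 + c₂) * (u q + v q) - c₁ * q.2 + c₄))) (t, x) = 0 := by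
  have hUc : ContDiff ℝ (⊤ : ℕ∞) (fun y => u (t, y)) := (hu.of_le (by simp)).comp (contDiff_const.prodMk contDiff_id)
  obtain ⟨hU0, hU1⟩ := contDiff_infty_iff_deriv.mp hUc
  obtain ⟨hU1d, hU2⟩ := contDiff_infty_iff_deriv.mp hU1
  obtain ⟨hU2d, _⟩ := contDiff_infty_iff_deriv.mp hU2
  have hVc : ContDiff ℝ (⊤ : ℕ∞) (fun y => v (t, y)) := (hv.of_le (by simp)).comp (contDiff_const.prodMk contDiff_id)
  obtain ⟨hV0, hV1⟩ := contDiff_infty_iff_deriv.mp hVc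
  obtain ⟨hV1d, hV2⟩ := contDiff_infty_iff_deriv.mp hV1
  obtain ⟨hV2d, _⟩ := contDiff_infty_iff_deriv.mp hV2
  -- first x-derivative of φ, as a function of y
  have e1 : (fun y => pderivX
        (fun q => (2 * a * c₁ * q.1 + c₂) * (u q + v q) - c₁ * q.2 + c₄) (t, y))
      = fun y => (2 * a * c₁ * t + c₂)
          * (deriv (fun y => u (t, y)) y + deriv (fun y => v (t, y)) y) - c₁ :=
    funext fun y => phiX a c₁ c₂ c₄ u v hu hv t y
  -- second x-derivative
  have e2 : (fun y => pderivX (pderivX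
        (fun q => (2 * a * c₁ * q.1 + c₂) * (u q + v q) - c₁ * q.2 + c₄)) (t, y))
      = fun y => (2 * a * c₁ * t + c₂)
          * (deriv (deriv (fun y => u (t, y))) y + deriv (deriv (fun y => v (t, y))) y) := by
    funext y
    show deriv (fun y' => pderivX
        (fun q => (2 * a * c₁ * q.1 + c₂) * (u q + v q) - c₁ * q.2 + c₄) (t, y')) y = _
    rw [e1]
    exact ((((hU1d y).hasDerivAt.add (hV1d y).hasDerivAt).const_mul
      (2 * a * c₁ * t + c₂)).sub_const c₁).deriv
  -- third x-derivative at (t, x)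
  have e3 : pderivX (pderivX (pderivX
        (fun q => (2 * a * c₁ * q.1 + c₂) * (u q + v q) - c₁ * q.2 + c₄))) (t, x)
      = (2 * a * c₁ * t + c₂)
          * (deriv (deriv (deriv (fun y => u (t, y)))) x
            + deriv (deriv (deriv (fun y => v (t, y)))) x) := by
    show deriv (fun y => pderivX (pderivX
        (fun q => (2 * a * c₁ * q.1 + c₂) * (u q + v q) - c₁ * q.2 + c₄)) (t, y)) x = _
    rw [e2]
    exact (((hU2d x).hasDerivAt.add (hV2d x).hasDerivAt).const_mul
      (2 * a * c₁ * t + c₂)).deriv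
  -- t-derivative at (t, x)
  have hUt : Differentiable ℝ (fun s => u (s, x)) :=
    (hu.comp (contDiff_id.prodMk contDiff_const)).differentiable (by simp)
  have hVt : Differentiable ℝ (fun s => v (s, x)) :=
    (hv.comp (contDiff_id.prodMk contDiff_const)).differentiable (by simp)
  have eT : pderivT (fun q => (2 * a * c₁ * q.1 + c₂) * (u q + v q) - c₁ * q.2 + c₄) (t, x)
      = 2 * a * c₁ * (u (t, x) + v (t, x))
        + (2 * a * c₁ * t + c₂) * (pderivT u (t, x) + pderivT v (t, x)) := by
    show deriv (fun s => (2 * a * c₁ * s + c₂) * (u (s, x) + v (s, x)) - c₁ * x + c₄) t = _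
    have h1 : HasDerivAt (fun s => 2 * a * c₁ * s + c₂) (2 * a * c₁) t := by
      simpa using ((hasDerivAt_id' t).const_mul (2 * a * c₁)).add_const c₂
    have h : HasDerivAt (fun s => (2 * a * c₁ * s + c₂) * (u (s, x) + v (s, x)) - c₁ * x + c₄)
        (2 * a * c₁ * (u (t, x) + v (t, x))
          + (2 * a * c₁ * t + c₂) * (deriv (fun s => u (s, x)) t + deriv (fun s => v (s, x)) t)) t :=
      ((h1.mul ((hUt t).hasDerivAt.add ((hVt t).hasDerivAt))).sub_const (c₁ * x)).add_const c₄
    rw [h.deriv]; rfl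
  -- nonlinear terms of the system
  have eNu : pderivX (fun q => a * (u q + v q) * u q) (t, x)
      = a * ((deriv (fun y => u (t, y)) x + deriv (fun y => v (t, y)) x) * u (t, x)
          + (u (t, x) + v (t, x)) * deriv (fun y => u (t, y)) x) := by
    show deriv (fun y => a * (u (t, y) + v (t, y)) * u (t, y)) x = _
    rw [show (fun y => a * (u (t, y) + v (t, y)) * u (t, y))
        = fun y => a * ((u (t, y) + v (t, y)) * u (t, y)) from by funext y; ring]
    exact ((((hU0 x).hasDerivAt.add (hV0 x).hasDerivAt).mul (hU0 x).hasDerivAt).const_mul a).deriv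
  have eNv : pderivX (fun q => a * (u q + v q) * v q) (t, x)
      = a * ((deriv (fun y => u (t, y)) x + deriv (fun y => v (t, y)) x) * v (t, x)
          + (u (t, x) + v (t, x)) * deriv (fun y => v (t, y)) x) := by
    show deriv (fun y => a * (u (t, y) + v (t, y)) * v (t, y)) x = _
    rw [show (fun y => a * (u (t, y) + v (t, y)) * v (t, y))
        = fun y => a * ((u (t, y) + v (t, y)) * v (t, y)) from by funext y; ring]
    exact ((((hU0 x).hasDerivAt.add (hV0 x).hasDerivAt).mul (hV0 x).hasDerivAt).const_mul a).deriv
  have e3u : pderivX (pderivX (pderivX u)) (t, x)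
      = deriv (deriv (deriv (fun y => u (t, y)))) x := rfl
  have e3v : pderivX (pderivX (pderivX v)) (t, x)
      = deriv (deriv (deriv (fun y => v (t, y)))) x := rfl
  have H := heu (t, x)
  have H2 := hev (t, x)
  rw [eNu, e3u] at H
  rw [eNv, e3v] at H2
  rw [eT, phiX a c₁ c₂ c₄ u v hu hv t x, e3]
  linear_combination (2 * a * c₁ * t + c₂) * H + (2 * a * c₁ * t + c₂) * H2

/-- Nonlinear self-adjointness for `b = 0`, `p = 1`: if `(u, v)` solves the system,
then `φ(t,x) = (2ac₁t + c₂)(u + v) - c₁x + c₄`, `ψ(t,x) = (2ac₁t + c₂)(u + v) - c₁x + c₅`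
solves the adjoint system. -/
theorem stmt_9 (a b c : ℝ) (p : ℕ) (hb : b = 0) (hp : p = 1) (u v : ℝ × ℝ → ℝ)
    (huv : IsGardnerSolution a b c p u v) (c₁ c₂ c₄ c₅ : ℝ) :
    SolvesAdjoint a b c p u v
      (fun q => (2 * a * c₁ * q.1 + c₂) * (u q + v q) - c₁ * q.2 + c₄)
      (fun q => (2 * a * c₁ * q.1 + c₂) * (u q + v q) - c₁ * q.2 + c₅) := by
  subst hb hp
  obtain ⟨hu, hv, heu, hev⟩ := huv
  have hfu : (fun q => a * ((u q) ^ 1 + (v q) ^ 1) * u q + 0 * (u q * v q) ^ 1 * v q)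
      = fun q => a * (u q + v q) * u q := by funext q; ring
  have hfv : (fun q => a * ((u q) ^ 1 + (v q) ^ 1) * v q + 0 * (u q * v q) ^ 1 * u q)
      = fun q => a * (u q + v q) * v q := by funext q; ring
  rw [hfu] at heu
  rw [hfv] at hev
  constructor
  · rintro ⟨t, x⟩
    have K := keyGardner a c c₁ c₂ c₄ u v hu hv heu hev t x
    have hψx : pderivX (fun q => (2 * a * c₁ * q.1 + c₂) * (u q + v q) - c₁ * q.2 + c₅) (t, x)
        = pderivX (fun q => (2 * a * c₁ * q.1 + c₂) * (u q + v q) - c₁ * q.2 + c₄) (t, x) :=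
      (phiX a c₁ c₂ c₅ u v hu hv t x).trans (phiX a c₁ c₂ c₄ u v hu hv t x).symm
    rw [fGu_eq, gGu_eq]
    linear_combination K + a * v (t, x) * hψx
  · rintro ⟨t, x⟩
    have K := keyGardner a c c₁ c₂ c₅ u v hu hv heu hev t x
    have hφx : pderivX (fun q => (2 * a * c₁ * q.1 + c₂) * (u q + v q) - c₁ * q.2 + c₄) (t, x)
        = pderivX (fun q => (2 * a * c₁ * q.1 + c₂) * (u q + v q) - c₁ * q.2 + c₅) (t, x) :=
      (phiX a c₁ c₂ c₄ u v hu hv t x).trans (phiX a c₁ c₂ c₅ u v hu hv t x).symm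
    rw [fGv_eq, gGv_eq]
    linear_combination K + a * u (t, x) * hφx
end
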